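/- arXiv:2304.03843 — 7 statements merged into one kernel-verified Lean document; each statement's English description precedes it below -/
import Mathlib

section
/- Let S be a finite nonempty set, let p be a probability mass function on S, and let u be the uniform probability mass function on S (u(s) = 1/|S| for all s). Define the risk R(q) = −Σ_{s∈S} p(s) log q(s) − Σ_{s∈S} u(s) log q(s) for strictly positive probability mass functions q on S. Then q*(s) = (p(s) + u(s))/2 is strictly positive, and for every strictly positive probability mass function q on S, R(q*) ≤ R(q), with equality if and only if q = q*. -/
lemma gibbs_aux (a b : ℝ) (ha : 0 < a) (hb : 0 < b) :
    b * Real.log a - b * Real.log b ≤ a - b := by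
  have h := Real.log_le_sub_one_of_pos (show 0 < a / b by positivity)
  rw [Real.log_div ha.ne' hb.ne'] at h
  have h2 : b * (Real.log a - Real.log b) ≤ b * (a / b - 1) :=
    mul_le_mul_of_nonneg_left h hb.le
  have h3 : b * (a / b - 1) = a - b := by field_simp
  nlinarith

lemma gibbs_aux_strict (a b : ℝ) (ha : 0 < a) (hb : 0 < b) (hab : a ≠ b) :
    b * Real.log a - b * Real.log b < a - b := by
  have hne : a / b ≠ 1 := by
    simp only [ne_eq, div_eq_one_iff_eq hb.ne']; exact hab
  have h := Real.log_lt_sub_one_of_pos (show 0 < a / b by positivity) hne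
  rw [Real.log_div ha.ne' hb.ne'] at h
  have h2 : b * (Real.log a - Real.log b) < b * (a / b - 1) :=
    (mul_lt_mul_iff_right₀ hb).mpr h
  have h3 : b * (a / b - 1) = a - b := by field_simp
  nlinarith

/-- Characterization of the minimizer of the paper's risk (Equation 5),
R(q) = H(p,q) + H(u,q): the minimizer is the mixture (p + u)/2 of the data
distribution p and the uniform distribution u. -/
theorem mixture_minimizes_entropy_regularized_risk
    {S : Type*} [Fintype S] [Nonempty S]
    (p : S → ℝ)
    (hp_nonneg : ∀ s, 0 ≤ p s) (hp_sum : ∑ s, p s = 1)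
    (u : S → ℝ) (hu : ∀ s, u s = 1 / (Fintype.card S : ℝ))
    (R : (S → ℝ) → ℝ)
    (hR : ∀ q : S → ℝ,
      R q = -(∑ s, p s * Real.log (q s)) - ∑ s, u s * Real.log (q s))
    (qstar : S → ℝ)
    (hqstar : ∀ s, qstar s = (p s + u s) / 2) :
    (∀ s, 0 < qstar s) ∧
      ∀ q : S → ℝ, (∀ s, 0 < q s) → (∑ s, q s = 1) →
        R qstar ≤ R q ∧ (R qstar = R q ↔ q = qstar) := by
  have hcard : (0:ℝ) < (Fintype.card S : ℝ) := by
    exact_mod_cast Fintype.card_pos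
  have hu_pos : ∀ s, 0 < u s := fun s => by rw [hu]; positivity
  have hqs_pos : ∀ s, 0 < qstar s := fun s => by
    rw [hqstar]; have h1 := hp_nonneg s; have h2 := hu_pos s; linarith
  have hu_sum : ∑ s, u s = 1 := by
    simp only [hu, Finset.sum_const, Finset.card_univ, nsmul_eq_mul]
    field_simp
  have hqsum : ∑ s : S, qstar s = 1 := by
    simp only [hqstar]
    rw [← Finset.sum_div, Finset.sum_add_distrib, hp_sum, hu_sum]
    norm_num
  have hRform : ∀ q' : S → ℝ, R q' = -∑ s, 2 * qstar s * Real.log (q' s) := by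
    intro q'
    rw [hR]
    have h : ∑ s, 2 * qstar s * Real.log (q' s)
        = ∑ s, p s * Real.log (q' s) + ∑ s, u s * Real.log (q' s) := by
      rw [← Finset.sum_add_distrib]
      apply Finset.sum_congr rfl
      intro s _
      rw [hqstar]; ring
    rw [h]; ring
  refine ⟨hqs_pos, fun q hq hqsum1 => ?_⟩
  have hdiff : R q - R qstar
      = ∑ s, (2 * qstar s * Real.log (qstar s) - 2 * qstar s * Real.log (q s)) := by
    rw [hRform q, hRform qstar, Finset.sum_sub_distrib]; ring
  have hle : ∀ s ∈ Finset.univ, 2 * (qstar s - q s)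
      ≤ 2 * qstar s * Real.log (qstar s) - 2 * qstar s * Real.log (q s) := by
    intro s _
    have := gibbs_aux (q s) (qstar s) (hq s) (hqs_pos s)
    nlinarith
  have hsum0 : ∑ s, 2 * (qstar s - q s) = 0 := by
    have : ∑ s, 2 * (qstar s - q s) = 2 * ((∑ s, qstar s) - ∑ s, q s) := by
      rw [← Finset.mul_sum, Finset.sum_sub_distrib]
    rw [this, hqsum, hqsum1]; ring
  have hmain : R qstar ≤ R q := by
    have := Finset.sum_le_sum hle
    rw [hsum0, ← hdiff] at this
    linarith
  refine ⟨hmain, ⟨fun heq => ?_, fun heq => by rw [heq]⟩⟩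
  by_contra hne
  obtain ⟨s0, hs0⟩ := Function.ne_iff.mp hne
  have hstrict := Finset.sum_lt_sum hle ⟨s0, Finset.mem_univ s0, by
    have := gibbs_aux_strict (q s0) (qstar s0) (hq s0) (hqs_pos s0) hs0
    nlinarith⟩
  rw [hsum0, ← hdiff] at hstrict
  linarith
end

section
/- Let X be a finite nonempty set with |X| = n, let N ≥ 3, and let p_d be a chain-structured joint distribution on X^N given by p_d(y1, …, yN) = π(y1) * Π_{k=1}^{N−1} P_k(y_k, y_{k+1}), where π is a probability mass function on X and each P_k is a row-stochastic n×n matrix indexed by X. Let S = {1,…,N} × X × {1,…,N} × X, define the training distribution p on S by p(i, y, j, y') = (1/(2(N−1))) * p_d(Y_i = y, Y_j = y') if |i − j| = 1 and p(i, y, j, y') = 0 otherwise, let u be the uniform distribution on S, and let q*(s) = (p(s) + u(s))/2 be the minimizer of the risk R(q) = −Σ_{s∈S} p(s) log q(s) − Σ_{s∈S} u(s) log q(s). Then for every i ∈ {1,…,N−1} and every y ∈ X with p_d(Y_i = y) > 0, there exists λ ∈ (0,1) such that for all y' ∈ X, the conditional q*(v2 = y' | i1 = i, v1 = y, i2 =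 i+1) := q*(i, y, i+1, y') / Σ_{y''∈X} q*(i, y, i+1, y'') equals λ * p_d(Y_{i+1} = y' | Y_i = y) + (1 − λ)/n. -/
/-!
On an adjacent pair `(i, i+1)` the minimizer `q*` is an affine function `c · p_d(Y_i = a, Y_{i+1} = b) + e`
of the joint marginal with `c, e > 0`. Summing over `b` turns the joint marginal into `p_d(Y_i = a)`,
so the normalized `q*` is the mixture of `p_d(Y_{i+1} = b | Y_i = a)` and the uniform distribution
with weight `λ = c p_d(Y_i = a) / (c p_d(Y_i = a) + n e)`.
-/

open Finset

theorem exists_mixture_of_div_sum_affine {ι : Type*} [Fintype ι] (m : ι → ℝ) {c e : ℝ}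
    (hc : 0 < c) (he : 0 < e) (hm : 0 < ∑ i, m i) :
    ∃ lam ∈ Set.Ioo (0 : ℝ) 1, ∀ b, (c * m b + e) / ∑ b', (c * m b' + e) =
      lam * (m b / ∑ i, m i) + (1 - lam) / Fintype.card ι := by
  set M := ∑ i, m i
  have hcard : (0 : ℝ) < Fintype.card ι := by
    obtain ⟨i, -, -⟩ := Finset.exists_ne_zero_of_sum_ne_zero hm.ne'
    exact_mod_cast Fintype.card_pos_iff.mpr ⟨i⟩
  have hsum : ∑ b', (c * m b' + e) = c * M + Fintype.card ι * e := by
    rw [sum_add_distrib, ← mul_sum, sum_const, card_univ, nsmul_eq_mul]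
  have hcM : 0 < c * M := mul_pos hc hm
  have hne : 0 < (Fintype.card ι : ℝ) * e := mul_pos hcard he
  refine ⟨c * M / (c * M + Fintype.card ι * e), ⟨by positivity, ?_⟩, fun b => ?_⟩
  · rw [div_lt_one (by positivity)]
    linarith
  · rw [hsum]
    field_simp
    ring

theorem sum_sum_ite_and_eq {Ω X : Type*} [Fintype Ω] [Fintype X] [DecidableEq X]
    (f : Ω → ℝ) (g h : Ω → X) (a : X) :
    ∑ b, ∑ ω, (if g ω = a ∧ h ω = b then f ω else 0) = ∑ ω, if g ω = a then f ω else 0 := by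
  rw [sum_comm]
  refine sum_congr rfl fun ω _ => ?_
  simp only [ite_and]
  split_ifs <;> simp

-- Indices are 0-based: the paper's `Y_1, …, Y_N` are `Y ⟨0, _⟩, …, Y ⟨N - 1, _⟩` here.
/-- Part (i) of Theorem 2 (Theorem A.2) of the paper: for adjacent variable pairs of
the chain, the risk minimizer's learned conditional is a strict mixture of the true
conditional probability and the uniform distribution.

Variables of the chain are indexed by `Fin N` (0-based, so the paper's variables
`Y_1, …, Y_N` correspond to indices `0, …, N-1`). `pd` is the chain-structured joint
distribution, `marg1 i a = p_d(Y_i = a)`, `marg2 i j a b = p_d(Y_i = a, Y_j = b)`,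
`p` is the training distribution on sequences `(i1, v1, i2, v2)` supported on adjacent
index pairs, `u` is the uniform distribution on such sequences, and
`qstar = (p + u)/2` is the minimizer of the risk `R(q) = H(p,q) + H(u,q)`. -/
theorem risk_minimizer_adjacent_conditional_is_mixture
    {X : Type*} [Fintype X] [DecidableEq X]
    (n : ℕ) (hn : Fintype.card X = n)
    (N : ℕ)
    (pd : (Fin N → X) → ℝ)
    (marg1 : Fin N → X → ℝ)
    (hmarg1 : ∀ (i : Fin N) (a : X),
      marg1 i a = ∑ y : Fin N → X, if y i = a then pd y else 0)
    (marg2 : Fin N → Fin N → X → X → ℝ)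
    (hmarg2 : ∀ (i j : Fin N) (a b : X),
      marg2 i j a b = ∑ y : Fin N → X, if y i = a ∧ y j = b then pd y else 0)
    (p : Fin N × X × Fin N × X → ℝ)
    (hp : ∀ (i : Fin N) (a : X) (j : Fin N) (b : X),
      p (i, a, j, b) =
        if (i : ℕ) + 1 = (j : ℕ) ∨ (j : ℕ) + 1 = (i : ℕ) then
          (1 / (2 * ((N : ℝ) - 1))) * marg2 i j a b
        else 0)
    (u : Fin N × X × Fin N × X → ℝ)
    (hu : ∀ s, u s = 1 / (Fintype.card (Fin N × X × Fin N × X) : ℝ))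
    (qstar : Fin N × X × Fin N × X → ℝ)
    (hqstar : ∀ s, qstar s = (p s + u s) / 2) :
    ∀ (i : Fin N) (hi : (i : ℕ) + 1 < N) (a : X), 0 < marg1 i a →
      ∃ lam : ℝ, lam ∈ Set.Ioo (0 : ℝ) 1 ∧
        ∀ b : X,
          qstar (i, a, ⟨(i : ℕ) + 1, hi⟩, b) /
              (∑ b' : X, qstar (i, a, ⟨(i : ℕ) + 1, hi⟩, b')) =
            lam * (marg2 i ⟨(i : ℕ) + 1, hi⟩ a b / marg1 i a) + (1 - lam) / (n : ℝ) := by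
  intro i hi a hma
  set j : Fin N := ⟨(i : ℕ) + 1, hi⟩
  set K := (Fintype.card (Fin N × X × Fin N × X) : ℝ)
  have hc : 0 < 1 / (2 * ((N : ℝ) - 1)) / 2 := by
    have : (2 : ℝ) ≤ N := by exact_mod_cast (show 2 ≤ N by omega)
    have : 0 < 2 * ((N : ℝ) - 1) := by linarith
    positivity
  have he : 0 < 1 / K / 2 := by
    have : (0 : ℝ) < K := Nat.cast_pos.mpr (Fintype.card_pos_iff.mpr ⟨(i, a, i, a)⟩)
    positivity
  have hq : ∀ b, qstar (i, a, j, b) = 1 / (2 * ((N : ℝ) - 1)) / 2 * marg2 i j a b + 1 / K / 2 := by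
    intro b
    rw [hqstar, hp, if_pos (Or.inl rfl), hu]
    ring
  have hsum : ∑ b, marg2 i j a b = marg1 i a := by
    simp only [hmarg1, hmarg2]
    exact sum_sum_ite_and_eq pd (· i) (· j) a
  simp only [hq]
  obtain ⟨lam, hlam, hmix⟩ := exists_mixture_of_div_sum_affine (marg2 i j a) hc he (hsum ▸ hma)
  exact ⟨lam, hlam, fun b => by rw [hmix, hsum, hn]⟩
end

section
/- Let X be a finite nonempty set with |X| = n, let N ≥ 3, and let p_d be a chain-structured joint distribution on X^N given by p_d(y1, …, yN) = π(y1) * Π_{k=1}^{N−1} P_k(y_k, y_{k+1}), where π is a probability mass function on X and each P_k is a row-stochastic n×n matrix indexed by X. Let S = {1,…,N} × X × {1,…,N} × X, define the training distribution p on S by p(i, y, j, y') = (1/(2(N−1))) * p_d(Y_i = y, Y_j = y') if |i − j| = 1 and p(i, y, j, y') = 0 otherwise, let u be the uniform distribution on S, and let q*(s) = (p(s) + u(s))/2 be the minimizer of the risk R(q) = −Σ_{s∈S} p(s) log q(s) − Σ_{s∈S} u(s) log q(s). Then for every pair of indices i, j ∈ {1,…,N} with |i − j| ≥ 2 and every y,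 y' ∈ X, the conditional q*(v2 = y' | i1 = j, v1 = y, i2 = i) := q*(j, y, i, y') / Σ_{y''∈X} q*(j, y, i, y'') equals 1/n. -/
/-- Part (ii) of Theorem 2 (Theorem A.2) of the paper: for non-adjacent variable pairs
of the chain (which never appear together in training), the risk minimizer's learned
conditional is exactly the uniform distribution on the `n` possible values.

Variables of the chain are indexed by `Fin N` (0-based, so the paper's variables
`Y_1, …, Y_N` correspond to indices `0, …, N-1`). `pd` is the chain-structured joint
distribution, `marg1 i a = p_d(Y_i = a)`, `marg2 i j a b = p_d(Y_i = a, Y_j = b)`,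
`p` is the training distribution on sequences `(i1, v1, i2, v2)` supported on adjacent
index pairs, `u` is the uniform distribution on such sequences, and
`qstar = (p + u)/2` is the minimizer of the risk `R(q) = H(p,q) + H(u,q)`. -/
theorem risk_minimizer_nonadjacent_conditional_is_uniform
    {X : Type*} [Fintype X] [DecidableEq X] [Nonempty X]
    (n : ℕ) (hn : Fintype.card X = n)
    (N : ℕ) (hN : 3 ≤ N)
    (pi0 : X → ℝ) (hpi0_nonneg : ∀ x, 0 ≤ pi0 x) (hpi0_sum : ∑ x, pi0 x = 1)
    (P : ℕ → X → X → ℝ)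
    (hP_nonneg : ∀ k x y, 0 ≤ P k x y)
    (hP_row : ∀ k x, ∑ y, P k x y = 1)
    (pd : (Fin N → X) → ℝ)
    (hpd : ∀ y : Fin N → X,
      pd y = pi0 (y ⟨0, by omega⟩) *
        ∏ k : Fin (N - 1),
          P (k : ℕ) (y ⟨(k : ℕ), by have := k.isLt; omega⟩)
            (y ⟨(k : ℕ) + 1, by have := k.isLt; omega⟩))
    (marg1 : Fin N → X → ℝ)
    (hmarg1 : ∀ (i : Fin N) (a : X),
      marg1 i a = ∑ y : Fin N → X, if y i = a then pd y else 0)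
    (marg2 : Fin N → Fin N → X → X → ℝ)
    (hmarg2 : ∀ (i j : Fin N) (a b : X),
      marg2 i j a b = ∑ y : Fin N → X, if y i = a ∧ y j = b then pd y else 0)
    (p : Fin N × X × Fin N × X → ℝ)
    (hp : ∀ (i : Fin N) (a : X) (j : Fin N) (b : X),
      p (i, a, j, b) =
        if (i : ℕ) + 1 = (j : ℕ) ∨ (j : ℕ) + 1 = (i : ℕ) then
          (1 / (2 * ((N : ℝ) - 1))) * marg2 i j a b
        else 0)
    (u : Fin N × X × Fin N × X → ℝ)
    (hu : ∀ s, u s = 1 / (Fintype.card (Fin N × X × Fin N × X) : ℝ))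
    (qstar : Fin N × X × Fin N × X → ℝ)
    (hqstar : ∀ s, qstar s = (p s + u s) / 2) :
    ∀ i j : Fin N, ((i : ℕ) + 2 ≤ (j : ℕ) ∨ (j : ℕ) + 2 ≤ (i : ℕ)) →
      ∀ a b : X,
        qstar (j, a, i, b) / (∑ b' : X, qstar (j, a, i, b')) = 1 / (n : ℝ) := by
  intro i j hij a b
  have hcard : (0:ℝ) < (Fintype.card (Fin N × X × Fin N × X) : ℝ) := by
    have hNpos : 0 < N := by omega
    have : Nonempty (Fin N) := ⟨⟨0, hNpos⟩⟩
    have : 0 < Fintype.card (Fin N × X × Fin N × X) := Fintype.card_pos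
    exact_mod_cast this
  set c : ℝ := 1 / (Fintype.card (Fin N × X × Fin N × X) : ℝ) with hc
  have hcpos : 0 < c := by positivity
  have hq : ∀ b' : X, qstar (j, a, i, b') = c / 2 := by
    intro b'
    rw [hqstar, hp, hu]
    have : ¬ ((j : ℕ) + 1 = (i : ℕ) ∨ (i : ℕ) + 1 = (j : ℕ)) := by omega
    rw [if_neg this]
    ring
  rw [hq b]
  have hsum : (∑ b' : X, qstar (j, a, i, b')) = (n : ℝ) * (c / 2) := by
    rw [Finset.sum_congr rfl (fun b' _ => hq b')]
    simp [hn, mul_comm]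
  rw [hsum]
  have hnpos : 0 < n := by rw [← hn]; exact Fintype.card_pos
  field_simp
end

section
/- Let n ≥ 1, let U be the n×n real matrix with every entry equal to 1/n, let P1 and P2 be n×n doubly stochastic real matrices, and let λ1, λ2 ∈ [0,1]. Then (λ1·P1 + (1−λ1)·U) * (λ2·P2 + (1−λ2)·U) = λ1·λ2·(P1 * P2) + (1 − λ1·λ2)·U. -/
/-- Base case of the induction in the proof of Theorem 3 (Theorem A.3) of the paper:
chaining two learned conditionals, each a λ-mixture of a true doubly stochastic
transition matrix with the uniform matrix `U` (all entries `1/n`), yields a mixture of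
the composed true transition with the uniform matrix, with mixture weight `λ1 * λ2`. -/
theorem mixture_of_doubly_stochastic_mul
    (n : ℕ) (hn : 1 ≤ n)
    (U : Matrix (Fin n) (Fin n) ℝ) (hU : ∀ i j, U i j = 1 / (n : ℝ))
    (P1 P2 : Matrix (Fin n) (Fin n) ℝ)
    (hP1_nonneg : ∀ i j, 0 ≤ P1 i j)
    (hP1_row : ∀ i, ∑ j, P1 i j = 1)
    (hP1_col : ∀ j, ∑ i, P1 i j = 1)
    (hP2_nonneg : ∀ i j, 0 ≤ P2 i j)
    (hP2_row : ∀ i, ∑ j, P2 i j = 1)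
    (hP2_col : ∀ j, ∑ i, P2 i j = 1)
    (l1 l2 : ℝ) (hl1 : l1 ∈ Set.Icc (0 : ℝ) 1) (hl2 : l2 ∈ Set.Icc (0 : ℝ) 1) :
    (l1 • P1 + (1 - l1) • U) * (l2 • P2 + (1 - l2) • U) =
      (l1 * l2) • (P1 * P2) + (1 - l1 * l2) • U := by
  have hn0 : (n : ℝ) ≠ 0 := by positivity
  have hPU : P1 * U = U := by
    ext i j
    simp only [Matrix.mul_apply, hU]
    rw [← Finset.sum_mul, hP1_row, one_mul]
  have hUP : U * P2 = U := by
    ext i j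
    simp only [Matrix.mul_apply, hU]
    rw [← Finset.mul_sum, hP2_col, mul_one]
  have hUU : U * U = U := by
    ext i j
    simp only [Matrix.mul_apply, hU]
    rw [Finset.sum_const, Finset.card_univ, Fintype.card_fin, nsmul_eq_mul]
    field_simp
  simp only [Matrix.add_mul, Matrix.mul_add, Matrix.smul_mul, Matrix.mul_smul, hPU, hUP, hUU]
  ext i j
  simp only [Matrix.add_apply, Matrix.smul_apply, smul_smul, smul_eq_mul]
  ring
end

section
/- Let n ≥ 1, let U be the n×n real matrix with every entry equal to 1/n, let k ≥ 1, let P1, …, Pk be n×n doubly stochastic real matrices, and let λ1, …, λk ∈ [0,1]. Then Π_{m=1}^{k} (λm·Pm + (1−λm)·U) = (Π_{m=1}^{k} λm) · (Π_{m=1}^{k} Pm) + (1 − Π_{m=1}^{k} λm) · U, where both matrix products are taken in order from m = 1 to m = k. -/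
section Aux

variable {n : ℕ} (U : Matrix (Fin n) (Fin n) ℝ)

lemma aux_mulU (hU : ∀ i j, U i j = 1 / (n : ℝ))
    (Q : Matrix (Fin n) (Fin n) ℝ) (hrow : ∀ i, ∑ j, Q i j = 1) :
    Q * U = U := by
  ext i j
  simp only [Matrix.mul_apply, hU]
  rw [← Finset.sum_mul, hrow, one_mul]

lemma aux_Umul (hU : ∀ i j, U i j = 1 / (n : ℝ))
    (Q : Matrix (Fin n) (Fin n) ℝ) (hcol : ∀ j, ∑ i, Q i j = 1) :
    U * Q = U := by
  ext i j
  simp only [Matrix.mul_apply, hU]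
  rw [← Finset.mul_sum, hcol, mul_one]

lemma aux_UmulU (hn : 1 ≤ n) (hU : ∀ i j, U i j = 1 / (n : ℝ)) :
    U * U = U := by
  have hn0 : (n : ℝ) ≠ 0 := by positivity
  apply aux_Umul U hU
  intro j
  simp only [hU]
  rw [Finset.sum_const, Finset.card_univ, Fintype.card_fin, nsmul_eq_mul]
  field_simp

lemma aux_prod_mulU (hU : ∀ i j, U i j = 1 / (n : ℝ))
    (P : ℕ → Matrix (Fin n) (Fin n) ℝ)
    (hP_row : ∀ m, ∀ i, ∑ j, P m i j = 1) (k : ℕ) :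
    ((List.range k).map P).prod * U = U := by
  induction k with
  | zero => simp
  | succ k ih =>
      rw [List.range_succ, List.map_append, List.prod_append, List.map_singleton,
        List.prod_singleton, mul_assoc, aux_mulU U hU _ (hP_row k), ih]

end Aux

/-- Inductive claim in the proof of Theorem 3 (Theorem A.3) of the paper: chaining
`k` learned conditionals, each a `λm`-mixture of a true doubly stochastic transition
matrix `Pm` with the uniform matrix `U` (all entries `1/n`), equals a mixture of the
true `k`-step transition with the uniform matrix, with mixture weight `∏ λm`.
The matrices `P 0, …, P (k-1)` correspond to the paper's `P1, …, Pk`, and matrix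
products are taken in order (via ordered list products). -/
theorem chained_mixtures_of_doubly_stochastic
    (n : ℕ) (hn : 1 ≤ n)
    (U : Matrix (Fin n) (Fin n) ℝ) (hU : ∀ i j, U i j = 1 / (n : ℝ))
    (k : ℕ) (hk : 1 ≤ k)
    (P : ℕ → Matrix (Fin n) (Fin n) ℝ)
    (hP_nonneg : ∀ m, ∀ i j, 0 ≤ P m i j)
    (hP_row : ∀ m, ∀ i, ∑ j, P m i j = 1)
    (hP_col : ∀ m, ∀ j, ∑ i, P m i j = 1)
    (lam : ℕ → ℝ) (hlam : ∀ m, lam m ∈ Set.Icc (0 : ℝ) 1) :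
    ((List.range k).map (fun m => lam m • P m + (1 - lam m) • U)).prod =
      (∏ m ∈ Finset.range k, lam m) • ((List.range k).map P).prod +
        (1 - ∏ m ∈ Finset.range k, lam m) • U := by
  clear hk
  induction k with
  | zero => simp
  | succ k ih =>
      rw [List.range_succ, List.map_append, List.prod_append, List.map_singleton,
        List.prod_singleton, List.map_append, List.map_singleton, List.prod_append,
        List.prod_singleton, ih, Finset.prod_range_succ]
      set A := ((List.range k).map P).prod with hA
      set L := ∏ m ∈ Finset.range k, lam m
      have hAU : A * U = U := aux_prod_mulU U hU P hP_row k
      have hUP : U * P k = U := aux_Umul U hU _ (hP_col k)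
      have hUU : U * U = U := aux_UmulU U hn hU
      rw [add_mul, mul_add, mul_add]
      rw [Matrix.smul_mul, Matrix.smul_mul, Matrix.smul_mul, Matrix.smul_mul,
        Matrix.mul_smul, Matrix.mul_smul, Matrix.mul_smul, Matrix.mul_smul,
        hAU, hUP, hUU, smul_smul, smul_smul, smul_smul, smul_smul]
      rw [add_assoc, ← add_smul, ← add_smul]
      congr 1
      ring
end

section
/- Let n ≥ 1, let U be the n×n real matrix with every entry equal to 1/n, let k ≥ 2, let P1, …, Pk be n×n doubly stochastic real matrices, and let λ1, …, λk ∈ (0,1). Set T = Π_{m=1}^{k} Pm (the true k-step transition matrix), Q = Π_{m=1}^{k} (λm·Pm + (1−λm)·U) (the expected scaffolded estimate), and λ = Π_{m=1}^{k} λm. Then λ ∈ (0,1), and for every pair of indices (a, b), Q(a,b) = λ·T(a,b) + (1−λ)/n, and consequently the squared bias of the scaffolded estimator satisfies |Q(a,b) − T(a,b)|² = (1−λ)² · |1/n − T(a,b)|². -/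
private lemma mulU_aux {n : ℕ} (hn : 1 ≤ n) (U M : Matrix (Fin n) (Fin n) ℝ)
    (hU : ∀ i j, U i j = 1 / (n : ℝ)) (hM : ∀ i, ∑ j, M i j = 1) : M * U = U := by
  ext i j
  simp only [Matrix.mul_apply, hU, ← Finset.sum_mul, hM, one_mul]

private lemma Umul_aux {n : ℕ} (hn : 1 ≤ n) (U M : Matrix (Fin n) (Fin n) ℝ)
    (hU : ∀ i j, U i j = 1 / (n : ℝ)) (hM : ∀ j, ∑ i, M i j = 1) : U * M = U := by
  ext i j
  simp only [Matrix.mul_apply, hU, ← Finset.mul_sum, hM, mul_one]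

private lemma UU_aux {n : ℕ} (hn : 1 ≤ n) (U : Matrix (Fin n) (Fin n) ℝ)
    (hU : ∀ i j, U i j = 1 / (n : ℝ)) : U * U = U := by
  refine mulU_aux hn U U hU fun i => ?_
  have hn' : (n : ℝ) ≠ 0 := Nat.cast_ne_zero.mpr (by omega)
  simp [hU, Finset.sum_const, hn']

/-- Bias computation in the proof of Theorem 3 (Theorem A.3) of the paper: the
expected scaffolded estimate `Q` (the ordered product of the learned conditionals
`λm • Pm + (1 - λm) • U`) is an entrywise mixture, with weight `λ = ∏ λm ∈ (0,1)`, of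
the true `k`-step transition `T` (the ordered product of the doubly stochastic `Pm`)
and the uniform value `1/n`, so its squared bias is `(1-λ)² * |1/n - T(a,b)|²`.
The matrices `P 0, …, P (k-1)` correspond to the paper's `P1, …, Pk`. -/
theorem scaffolded_estimator_bias
    (n : ℕ) (hn : 1 ≤ n)
    (U : Matrix (Fin n) (Fin n) ℝ) (hU : ∀ i j, U i j = 1 / (n : ℝ))
    (k : ℕ) (hk : 2 ≤ k)
    (P : ℕ → Matrix (Fin n) (Fin n) ℝ)
    (hP_nonneg : ∀ m, ∀ i j, 0 ≤ P m i j)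
    (hP_row : ∀ m, ∀ i, ∑ j, P m i j = 1)
    (hP_col : ∀ m, ∀ j, ∑ i, P m i j = 1)
    (lam : ℕ → ℝ) (hlam : ∀ m, lam m ∈ Set.Ioo (0 : ℝ) 1)
    (T : Matrix (Fin n) (Fin n) ℝ) (hT : T = ((List.range k).map P).prod)
    (Q : Matrix (Fin n) (Fin n) ℝ)
    (hQ : Q = ((List.range k).map (fun m => lam m • P m + (1 - lam m) • U)).prod)
    (l : ℝ) (hl : l = ∏ m ∈ Finset.range k, lam m) :
    l ∈ Set.Ioo (0 : ℝ) 1 ∧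
      ∀ a b : Fin n,
        Q a b = l * T a b + (1 - l) / (n : ℝ) ∧
          |Q a b - T a b| ^ 2 = (1 - l) ^ 2 * |1 / (n : ℝ) - T a b| ^ 2 := by
  -- key induction: Q_j = l_j • T_j + (1 - l_j) • U, and T_j has row sums 1
  have key : ∀ j : ℕ,
      (∀ i, ∑ c, (((List.range j).map P).prod) i c = 1) ∧
      ((List.range j).map (fun m => lam m • P m + (1 - lam m) • U)).prod
        = (∏ m ∈ Finset.range j, lam m) • (((List.range j).map P).prod)
          + (1 - ∏ m ∈ Finset.range j, lam m) • U := by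
    intro j
    induction j with
    | zero => simp [Matrix.one_apply]
    | succ j ih =>
      obtain ⟨ihrow, ihQ⟩ := ih
      have hrow : ∀ i, ∑ c, (((List.range (j+1)).map P).prod) i c = 1 := by
        intro i
        rw [List.range_succ, List.map_append, List.prod_append]
        simp only [List.map_cons, List.map_nil, List.prod_cons, List.prod_nil, mul_one,
          Matrix.mul_apply]
        rw [Finset.sum_comm]
        simp only [← Finset.mul_sum, hP_row, mul_one, ihrow]
      refine ⟨hrow, ?_⟩
      rw [List.range_succ]
      simp only [List.map_append, List.prod_append, List.map_cons, List.map_nil,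
        List.prod_cons, List.prod_nil, mul_one]
      rw [ihQ]
      have hTU : (((List.range j).map P).prod) * U = U := mulU_aux hn U _ hU ihrow
      have hUP : U * P j = U := Umul_aux hn U _ hU (hP_col j)
      have hUU : U * U = U := UU_aux hn U hU
      rw [Finset.prod_range_succ]
      set Tj := ((List.range j).map P).prod
      set lj := ∏ m ∈ Finset.range j, lam m
      rw [add_mul, mul_add, mul_add, Matrix.smul_mul, Matrix.smul_mul, Matrix.smul_mul,
        Matrix.smul_mul, Matrix.mul_smul, Matrix.mul_smul, Matrix.mul_smul, Matrix.mul_smul,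
        hTU, hUP, hUU]
      ext a b
      simp only [Matrix.add_apply, Matrix.smul_apply, smul_eq_mul]
      ring
  obtain ⟨hrow, hQeq⟩ := key k
  have hl0 : 0 < l := by
    rw [hl]; exact Finset.prod_pos fun m _ => (hlam m).1
  have hl1 : l < 1 := by
    obtain ⟨k', rfl⟩ : ∃ k', k = k' + 1 := ⟨k - 1, by omega⟩
    rw [hl, Finset.prod_range_succ]
    calc (∏ m ∈ Finset.range k', lam m) * lam k'
        ≤ 1 * lam k' := by
          apply mul_le_mul_of_nonneg_right _ (hlam k').1.le
          exact Finset.prod_le_one (fun m _ => (hlam m).1.le) (fun m _ => (hlam m).2.le)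
      _ < 1 := by rw [one_mul]; exact (hlam k').2
  refine ⟨⟨hl0, hl1⟩, fun a b => ?_⟩
  have hQab : Q a b = l * T a b + (1 - l) / (n : ℝ) := by
    rw [hQ, hQeq, hT, ← hl]
    simp only [Matrix.add_apply, Matrix.smul_apply, smul_eq_mul, hU]
    ring
  refine ⟨hQab, ?_⟩
  rw [hQab]
  rw [← abs_pow, ← abs_pow, ← abs_of_nonneg (a := (1-l)^2) (by positivity), ← abs_mul,
    ← mul_pow]
  congr 1
  ring
end

section
/- Let n ≥ 1, let U be the n×n real matrix with every entry equal to 1/n, let k ≥ 2, let P1, …, Pk be n×n doubly stochastic real matrices, and let λ1, …, λk ∈ (0,1). Set T = Π_{m=1}^{k} Pm and Q = Π_{m=1}^{k} (λm·Pm + (1−λm)·U). Then for every pair of indices (a, b) with T(a,b) ≠ 1/n, we have |Q(a,b) − T(a,b)|² < |1/n − T(a,b)|²; that is, the squared bias of the scaffolded (chain-of-thought) estimator is strictly smaller than the squared bias of the direct prediction estimator. -/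
/-- Theorem 1 / Theorem A.3 of the paper (the "reasoning gap"): the expected
scaffolded (chain-of-thought) estimate `Q` — the ordered product of the learned
conditionals `λm • Pm + (1 - λm) • U`, where `U` is the uniform matrix (all entries
`1/n`) and each `Pm` is doubly stochastic — has strictly smaller squared bias with
respect to the true `k`-step transition `T` than the direct prediction estimator,
which equals `1/n` for pairs never seen together in training.
The matrices `P 0, …, P (k-1)` correspond to the paper's `P1, …, Pk`. -/
theorem reasoning_gap
    (n : ℕ) (hn : 1 ≤ n)
    (U : Matrix (Fin n) (Fin n) ℝ) (hU : ∀ i j, U i j = 1 / (n : ℝ))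
    (k : ℕ) (hk : 2 ≤ k)
    (P : ℕ → Matrix (Fin n) (Fin n) ℝ)
    (hP_nonneg : ∀ m, ∀ i j, 0 ≤ P m i j)
    (hP_row : ∀ m, ∀ i, ∑ j, P m i j = 1)
    (hP_col : ∀ m, ∀ j, ∑ i, P m i j = 1)
    (lam : ℕ → ℝ) (hlam : ∀ m, lam m ∈ Set.Ioo (0 : ℝ) 1)
    (T : Matrix (Fin n) (Fin n) ℝ) (hT : T = ((List.range k).map P).prod)
    (Q : Matrix (Fin n) (Fin n) ℝ)
    (hQ : Q = ((List.range k).map (fun m => lam m • P m + (1 - lam m) • U)).prod) :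
    ∀ a b : Fin n, T a b ≠ 1 / (n : ℝ) →
      |Q a b - T a b| ^ 2 < |1 / (n : ℝ) - T a b| ^ 2 := by
  have hn' : (0:ℝ) < n := by exact_mod_cast Nat.lt_of_lt_of_le Nat.zero_lt_one hn
  -- M * U = U for row-stochastic M
  have hmulU : ∀ M : Matrix (Fin n) (Fin n) ℝ, (∀ i, ∑ j, M i j = 1) → M * U = U := by
    intro M hM
    ext i j
    simp only [Matrix.mul_apply, hU]
    rw [← Finset.sum_mul, hM, one_mul]
  have hUmul : ∀ M : Matrix (Fin n) (Fin n) ℝ, (∀ j, ∑ i, M i j = 1) → U * M = U := by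
    intro M hM
    ext i j
    simp only [Matrix.mul_apply, hU]
    rw [← Finset.mul_sum, hM, mul_one]
  have hUrow : ∀ i, ∑ j, U i j = 1 := by
    intro i
    simp [hU, Finset.sum_const]
    field_simp
  have hUU : U * U = U := hmulU U hUrow
  -- prefix products of P
  set Tf : ℕ → Matrix (Fin n) (Fin n) ℝ := fun m => ((List.range m).map P).prod with hTf
  have hTU : ∀ m, Tf m * U = U := by
    intro m
    induction m with
    | zero => simp [hTf]
    | succ m ih =>
      have : Tf (m+1) = Tf m * P m := by
        simp [hTf, List.range_succ]
      rw [this, Matrix.mul_assoc, hmulU (P m) (hP_row m), ih]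
  have key : ∀ m, ((List.range m).map (fun m => lam m • P m + (1 - lam m) • U)).prod
      = (∏ i ∈ Finset.range m, lam i) • Tf m + (1 - ∏ i ∈ Finset.range m, lam i) • U := by
    intro m
    induction m with
    | zero => simp [hTf]
    | succ m ih =>
      rw [List.range_succ, List.map_append, List.prod_append, ih]
      simp only [List.map_singleton, List.prod_singleton]
      have hTs : Tf (m+1) = Tf m * P m := by simp [hTf, List.range_succ]
      rw [Finset.prod_range_succ, hTs]
      set Λ := ∏ i ∈ Finset.range m, lam i
      rw [add_mul, Matrix.smul_mul, Matrix.smul_mul, mul_add, mul_add,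
        Matrix.mul_smul, Matrix.mul_smul, Matrix.mul_smul, Matrix.mul_smul,
        hTU m, hUmul (P m) (hP_col m), hUU]
      module
  intro a b hab
  set Λ := ∏ i ∈ Finset.range k, lam i with hΛ
  have hΛpos : 0 < Λ := Finset.prod_pos fun i _ => (hlam i).1
  have hΛlt : Λ < 1 := by
    have := Finset.prod_lt_prod_of_nonempty (s := Finset.range k) (f := lam) (g := fun _ => 1)
      (fun i _ => (hlam i).1) (fun i _ => (hlam i).2)
      (Finset.nonempty_range_iff.mpr (by omega))
    simpa using this
  have hQab : Q a b = Λ * T a b + (1 - Λ) * (1 / n) := by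
    rw [hQ, key k, hT]
    simp [Matrix.add_apply, Matrix.smul_apply, hU, smul_eq_mul, hTf, hΛ]
  have h1 : Q a b - T a b = (1 - Λ) * (1/n - T a b) := by
    rw [hQab]; ring
  have habs : |Q a b - T a b| = (1 - Λ) * |1/n - T a b| := by
    rw [h1, abs_mul, abs_of_pos (by linarith)]
  have hpos : 0 < |1/n - T a b| := abs_pos.mpr (by intro h; apply hab; linarith)
  have hlt : |Q a b - T a b| < |1/n - T a b| := by
    rw [habs]
    nlinarith
  have := pow_lt_pow_left₀ hlt (abs_nonneg _) (by norm_num : (2:ℕ) ≠ 0)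
  exact this
end
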